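/- Let Δ = Δ_0 + Δ_1 + ⋯ + Δ_k be a Minkowski sum decomposition of a reflexive polytope Δ ⊂ ℝ^d into lattice polytopes and σ̄ ⊂ ℝ^d ⊕ ℝ^{k+1} the Cayley cone. Then the dual cone satisfies σ̄∨ = ℝ_{≥0} · Conv({u − Σ_{i=0}^k min⟨Δ_i, u⟩ · r_i* : u ∈ Δ*} ∪ {r_0*, …, r_k*}). -/

import Mathlib

open scoped Pointwise
open Set

noncomputable section

/-- The standard pairing on `ℝ^n`. -/
def pairing {n : ℕ} (x y : Fin n → ℝ) : ℝ := ∑ i, x i * y i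

/-- A point of `ℝ^n` lying in the lattice `ℤ^n`. -/
def IsLatticePt {n : ℕ} (x : Fin n → ℝ) : Prop := ∀ i, ∃ z : ℤ, x i = (z : ℝ)

/-- A lattice polytope: the convex hull of finitely many lattice points. -/
def IsLatticePolytope {n : ℕ} (P : Set (Fin n → ℝ)) : Prop :=
  ∃ S : Set (Fin n → ℝ), S.Finite ∧ (∀ x ∈ S, IsLatticePt x) ∧ P = convexHull ℝ S

/-- The dual polytope `P* = {y | ⟨x,y⟩ ≥ -1 ∀ x ∈ P}`. -/
def polarDual {n : ℕ} (P : Set (Fin n → ℝ)) : Set (Fin n → ℝ) :=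
  {y | ∀ x ∈ P, -1 ≤ pairing x y}

/-- A reflexive polytope. -/
def IsReflexive {n : ℕ} (P : Set (Fin n → ℝ)) : Prop :=
  IsLatticePolytope P ∧ (0 : Fin n → ℝ) ∈ interior P ∧ IsLatticePolytope (polarDual P)

/-- `min⟨P, u⟩ = min_{x ∈ P} ⟨x, u⟩`. -/
def minPair {n : ℕ} (P : Set (Fin n → ℝ)) (u : Fin n → ℝ) : ℝ :=
  sInf ((fun x => pairing x u) '' P)

/-- The real vector space `ℝ^d ⊕ ℝ^k`. -/
abbrev Vdk (d k : ℕ) := (Fin d → ℝ) × (Fin k → ℝ)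

/-- The pairing on `ℝ^d ⊕ ℝ^k` (sum of the two standard pairings). -/
def pairingV {d k : ℕ} (x y : Vdk d k) : ℝ := pairing x.1 y.1 + pairing x.2 y.2

def IsLatticePtV {d k : ℕ} (x : Vdk d k) : Prop := IsLatticePt x.1 ∧ IsLatticePt x.2

def IsLatticePolytopeV {d k : ℕ} (P : Set (Vdk d k)) : Prop :=
  ∃ S : Set (Vdk d k), S.Finite ∧ (∀ x ∈ S, IsLatticePtV x) ∧ P = convexHull ℝ S

def polarDualV {d k : ℕ} (P : Set (Vdk d k)) : Set (Vdk d k) :=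
  {y | ∀ x ∈ P, -1 ≤ pairingV x y}

def IsReflexiveV {d k : ℕ} (P : Set (Vdk d k)) : Prop :=
  IsLatticePolytopeV P ∧ (0 : Vdk d k) ∈ interior P ∧ IsLatticePolytopeV (polarDualV P)

/-- The Cayley cone `σ̄ = {(t₀Δ₀ + ⋯ + t_kΔ_k, t₀, …, t_k) : tᵢ ≥ 0} ⊆ ℝ^d ⊕ ℝ^{k+1}`. -/
def cayleyCone {d k : ℕ} (Δ : Fin (k+1) → Set (Fin d → ℝ)) : Set (Vdk d (k+1)) :=
  {p | (∀ i, 0 ≤ p.2 i) ∧ p.1 ∈ ∑ i, p.2 i • Δ i}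

/-- The dual cone of a cone in `ℝ^d ⊕ ℝ^k`. -/
def dualConeV {d k : ℕ} (σ : Set (Vdk d k)) : Set (Vdk d k) :=
  {y | ∀ x ∈ σ, 0 ≤ pairingV x y}

/-!
A point `(u, s)` pairs nonnegatively with the Cayley cone exactly when
`min⟨Δᵢ, u⟩ + sᵢ ≥ 0` for every `i`, since the cone is generated by the points `(z, rᵢ)` with
`z ∈ Δᵢ`. Such a point is then `a • (v, -min⟨Δᵢ, v⟩) + ∑ᵢ (min⟨Δᵢ, u⟩ + sᵢ) • rᵢ*` with
`a = -min⟨Δ, u⟩ ≥ 0` and `v = u / a ∈ Δ*` (when `a = 0`, `u` is nonnegative on `Δ`, which has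
`0` in its interior, so `u = 0`); the nonnegative combination is rescaled to a convex one.
Conversely every generator lies in the dual cone, which is convex and closed under nonnegative
scaling.
-/

section Pairing

variable {n : ℕ}

lemma pairing_eq_dotProduct (x y : Fin n → ℝ) : pairing x y = x ⬝ᵥ y := rfl

lemma continuous_pairing_left (u : Fin n → ℝ) : Continuous fun x : Fin n → ℝ => pairing x u :=
  continuous_finsetSum _ fun i _ => (continuous_apply i).mul continuous_const

lemma IsLatticePolytope.isCompact {P : Set (Fin n → ℝ)} (hP : IsLatticePolytope P) :
    IsCompact P := by
  obtain ⟨S, hS, -, rfl⟩ := hP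
  exact hS.isCompact_convexHull ℝ

/-- `⟨-c • u, u⟩ = -c ‖u‖² < 0`, and `-c • u ∈ P` for small `c > 0`. -/
lemma eq_zero_of_forall_pairing_nonneg {P : Set (Fin n → ℝ)} (h0 : 0 ∈ interior P)
    {u : Fin n → ℝ} (hu : ∀ x ∈ P, 0 ≤ pairing x u) : u = 0 := by
  have hsmul : Filter.Tendsto (fun c : ℝ => c • -u) (nhdsWithin 0 (Ioi 0)) (nhds 0) := by
    refine Filter.Tendsto.mono_left ?_ nhdsWithin_le_nhds
    exact (continuous_id.smul continuous_const).tendsto' 0 0 (zero_smul ℝ _)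
  obtain ⟨c, hcP, hc⟩ :=
    ((hsmul.eventually (mem_interior_iff_mem_nhds.1 h0)).and self_mem_nhdsWithin).exists
  have h := hu _ hcP
  rw [pairing_eq_dotProduct, smul_dotProduct, neg_dotProduct, smul_eq_mul] at h
  have hself : u ⬝ᵥ u ≤ 0 := by nlinarith
  exact dotProduct_self_eq_zero.1 (le_antisymm hself (dotProduct_self_star_nonneg u))

lemma inv_smul_mem_polarDual {P : Set (Fin n → ℝ)} {c : ℝ} (hc : 0 ≤ c) {u : Fin n → ℝ}
    (hu : ∀ x ∈ P, -c ≤ pairing x u) : c⁻¹ • u ∈ polarDual P := by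
  intro x hx
  rw [pairing_eq_dotProduct, dotProduct_smul, smul_eq_mul, ← pairing_eq_dotProduct]
  rcases hc.eq_or_lt with rfl | hc
  · simp
  · rw [le_inv_mul_iff₀ hc]
    linarith [hu x hx]

end Pairing

section MinPair

variable {n : ℕ} {P : Set (Fin n → ℝ)}

lemma minPair_le (hP : IsCompact P) (u : Fin n → ℝ) {x : Fin n → ℝ} (hx : x ∈ P) :
    minPair P u ≤ pairing x u :=
  csInf_le (hP.bddBelow_image (continuous_pairing_left u).continuousOn) ⟨x, hx, rfl⟩

lemma le_minPair_iff (hP : IsCompact P) (hne : P.Nonempty) {u : Fin n → ℝ} {b : ℝ} :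
    b ≤ minPair P u ↔ ∀ x ∈ P, b ≤ pairing x u := by
  rw [minPair, le_csInf_iff (hP.bddBelow_image (continuous_pairing_left u).continuousOn)
    (hne.image _), forall_mem_image]

lemma minPair_smul {c : ℝ} (hc : 0 ≤ c) (u : Fin n → ℝ) :
    minPair P (c • u) = c * minPair P u := by
  have himage : (fun x => pairing x (c • u)) '' P = c • (fun x => pairing x u) '' P := by
    rw [← image_smul, image_image]
    simp only [pairing_eq_dotProduct, dotProduct_smul]
  rw [minPair, himage, Real.sInf_smul_of_nonneg hc, smul_eq_mul, minPair]

lemma sum_minPair_le {ι : Type*} [Fintype ι] {Δ : ι → Set (Fin n → ℝ)}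
    (hK : ∀ i, IsCompact (Δ i)) (u : Fin n → ℝ) {x : Fin n → ℝ} (hx : x ∈ ∑ i, Δ i) :
    ∑ i, minPair (Δ i) u ≤ pairing x u := by
  obtain ⟨z, hz, rfl⟩ := (mem_fintype_sum _ _).1 hx
  rw [pairing_eq_dotProduct, sum_dotProduct]
  exact Finset.sum_le_sum fun i _ => minPair_le (hK i) u (hz i)

end MinPair

section DualCone

variable {d k : ℕ}

lemma pairingV_add_right (x y z : Vdk d k) :
    pairingV x (y + z) = pairingV x y + pairingV x z := by
  simp only [pairingV, pairing_eq_dotProduct, Prod.fst_add, Prod.snd_add, dotProduct_add]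
  ring

lemma pairingV_smul_right (c : ℝ) (x y : Vdk d k) :
    pairingV x (c • y) = c * pairingV x y := by
  simp only [pairingV, pairing_eq_dotProduct, Prod.smul_fst, Prod.smul_snd, dotProduct_smul,
    smul_eq_mul]
  ring

lemma convex_dualConeV (σ : Set (Vdk d k)) : Convex ℝ (dualConeV σ) := by
  intro y hy z hz a b ha hb _ x hx
  rw [pairingV_add_right, pairingV_smul_right, pairingV_smul_right]
  exact add_nonneg (mul_nonneg ha (hy x hx)) (mul_nonneg hb (hz x hx))

lemma smul_mem_dualConeV {σ : Set (Vdk d k)} {t : ℝ} (ht : 0 ≤ t) {y : Vdk d k}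
    (hy : y ∈ dualConeV σ) : t • y ∈ dualConeV σ := fun x hx => by
  rw [pairingV_smul_right]
  exact mul_nonneg ht (hy x hx)

end DualCone

section CayleyCone

variable {d k : ℕ} {Δ : Fin (k+1) → Set (Fin d → ℝ)}

lemma mk_single_mem_cayleyCone (hne : ∀ j, (Δ j).Nonempty) {i : Fin (k+1)}
    {z : Fin d → ℝ} (hz : z ∈ Δ i) : ((z, Pi.single i 1) : Vdk d (k+1)) ∈ cayleyCone Δ := by
  classical
  refine ⟨fun j => by by_cases h : j = i <;> simp [h], ?_⟩
  refine (mem_fintype_sum _ _).2 ⟨Pi.single i z, fun j => ?_, by simp⟩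
  by_cases h : j = i
  · subst h
    simpa using hz
  · simpa [h] using (zero_smul_set (hne j)).symm.subset rfl

lemma mem_dualConeV_cayleyCone_iff (hK : ∀ i, IsCompact (Δ i)) (hne : ∀ i, (Δ i).Nonempty)
    {y : Vdk d (k+1)} :
    y ∈ dualConeV (cayleyCone Δ) ↔ ∀ i, 0 ≤ minPair (Δ i) y.1 + y.2 i := by
  constructor
  · intro hy i
    have hbound : -y.2 i ≤ minPair (Δ i) y.1 := by
      refine (le_minPair_iff (hK i) (hne i)).2 fun z hz => ?_
      have h := hy _ (mk_single_mem_cayleyCone hne hz)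
      rw [pairingV, pairing_eq_dotProduct (Pi.single i 1), single_dotProduct, one_mul] at h
      linarith
    linarith
  · rintro hy ⟨x, s⟩ ⟨hs, hx⟩
    dsimp only at hs hx
    obtain ⟨g, hg, rfl⟩ := (mem_fintype_sum _ _).1 hx
    choose z hz hgz using fun i => mem_smul_set.1 (hg i)
    have hsum : pairingV ((∑ i, g i, s) : Vdk d (k+1)) y =
        ∑ i, s i * (pairing (z i) y.1 + y.2 i) := by
      simp only [pairingV, pairing_eq_dotProduct, sum_dotProduct, ← hgz, smul_dotProduct,
        smul_eq_mul, mul_add, Finset.sum_add_distrib]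
      rfl
    rw [hsum]
    exact Finset.sum_nonneg fun i _ =>
      mul_nonneg (hs i) (by linarith [hy i, minPair_le (hK i) y.1 (hz i)])

end CayleyCone

section ConeHull

variable {E : Type*} [AddCommGroup E] [Module ℝ E]

def coneHull (G : Set E) : Set E := {y | ∃ t : ℝ, 0 ≤ t ∧ ∃ x ∈ convexHull ℝ G, y = t • x}

lemma coneHull_subset {G C : Set E} (hC : Convex ℝ C)
    (hsmul : ∀ t : ℝ, 0 ≤ t → ∀ x ∈ C, t • x ∈ C) (hG : G ⊆ C) : coneHull G ⊆ C := by
  rintro _ ⟨t, ht, x, hx, rfl⟩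
  exact hsmul t ht x (convexHull_min hG hC hx)

lemma sum_smul_mem_coneHull {ι : Type*} [Fintype ι] [Nonempty ι] {G : Set E} {w : ι → ℝ}
    (hw : ∀ i, 0 ≤ w i) {z : ι → E} (hz : ∀ i, z i ∈ G) : ∑ i, w i • z i ∈ coneHull G := by
  rcases (Finset.sum_nonneg fun i _ => hw i).eq_or_lt with hzero | hpos
  · have hw0 : ∀ i, w i = 0 := fun i =>
      (Finset.sum_eq_zero_iff_of_nonneg fun i _ => hw i).1 hzero.symm i (Finset.mem_univ i)
    refine ⟨0, le_rfl, z (Classical.arbitrary ι), subset_convexHull ℝ G (hz _), ?_⟩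
    simp [hw0]
  · refine ⟨∑ i, w i, hpos.le, Finset.univ.centerMass w z,
      Finset.univ.centerMass_mem_convexHull (fun i _ => hw i) hpos (fun i _ => hz i), ?_⟩
    rw [Finset.centerMass, smul_inv_smul₀ hpos.ne']

lemma smul_add_sum_smul_mem_coneHull {ι : Type*} [Fintype ι] {G : Set E} {a : ℝ} (ha : 0 ≤ a)
    {g : E} (hg : g ∈ G) {w : ι → ℝ} (hw : ∀ i, 0 ≤ w i) {z : ι → E} (hz : ∀ i, z i ∈ G) :
    a • g + ∑ i, w i • z i ∈ coneHull G := by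
  have h := sum_smul_mem_coneHull (G := G) (w := fun j : Option ι => j.elim a w)
    (z := fun j => j.elim g z) (fun j => j.rec ha hw) (fun j => j.rec hg hz)
  simpa only [Fintype.sum_option, Option.elim_none, Option.elim_some] using h

end ConeHull

section Generators

variable {d k : ℕ}

def cayleyGenerators (Δ : Fin (k+1) → Set (Fin d → ℝ)) : Set (Vdk d (k+1)) :=
  (fun u => ((u, fun i => -(minPair (Δ i) u)) : Vdk d (k+1))) '' polarDual (∑ i, Δ i) ∪
    ⋃ i : Fin (k+1), {(((0 : Fin d → ℝ), Pi.single i 1) : Vdk d (k+1))}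

variable {Δ : Fin (k+1) → Set (Fin d → ℝ)}

lemma cayleyGenerators_subset_dualConeV (hK : ∀ i, IsCompact (Δ i))
    (hne : ∀ i, (Δ i).Nonempty) : cayleyGenerators Δ ⊆ dualConeV (cayleyCone Δ) := by
  rintro _ (⟨u, -, rfl⟩ | hy)
  · exact (mem_dualConeV_cayleyCone_iff hK hne).2 fun i => by simp
  · obtain ⟨i, rfl⟩ := mem_iUnion.1 hy
    intro p hp
    simpa [pairingV, pairing_eq_dotProduct] using hp.1 i

lemma dualConeV_cayleyCone_subset_coneHull (hK : ∀ i, IsCompact (Δ i))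
    (hne : ∀ i, (Δ i).Nonempty) (h0 : 0 ∈ interior (∑ i, Δ i)) :
    dualConeV (cayleyCone Δ) ⊆ coneHull (cayleyGenerators Δ) := by
  rintro ⟨u, s⟩ hy
  rw [mem_dualConeV_cayleyCone_iff hK hne] at hy
  set a := -∑ i, minPair (Δ i) u with ha
  have hbound : ∀ x ∈ ∑ i, Δ i, -a ≤ pairing x u := fun x hx => by
    simpa [ha] using sum_minPair_le hK u hx
  have ha0 : 0 ≤ a := by simpa [pairing] using hbound 0 (interior_subset h0)
  have hv : a • a⁻¹ • u = u := by
    rcases ha0.eq_or_lt with ha0 | ha0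
    · have hu : u = 0 := eq_zero_of_forall_pairing_nonneg h0 fun x hx => by
        simpa [← ha0] using hbound x hx
      simp [hu]
    · exact smul_inv_smul₀ ha0.ne' u
  have hdecomp : ((u, s) : Vdk d (k+1)) =
      a • ((a⁻¹ • u, fun i => -minPair (Δ i) (a⁻¹ • u)) : Vdk d (k+1)) +
        ∑ i, (minPair (Δ i) u + s i) • ((0, Pi.single i 1) : Vdk d (k+1)) := by
    have hmin : ∀ i, a * minPair (Δ i) (a⁻¹ • u) = minPair (Δ i) u := fun i => by
      rw [← minPair_smul ha0, hv]
    refine Prod.ext (by simp [Prod.fst_sum, hv]) (funext fun i => ?_)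
    simp [Prod.snd_sum, Finset.sum_apply, Pi.single_apply, hmin]
  rw [hdecomp]
  refine smul_add_sum_smul_mem_coneHull ha0 ?_ hy fun i => ?_
  · exact Or.inl ⟨_, inv_smul_mem_polarDual ha0 hbound, rfl⟩
  · exact Or.inr (mem_iUnion.2 ⟨i, rfl⟩)

end Generators

/-- the dual of the Cayley cone is the cone over the convex hull of
`{u − Σᵢ min⟨Δᵢ,u⟩ rᵢ* : u ∈ Δ*} ∪ {r₀*, …, r_k*}`. -/
theorem dual_cayleyCone_eq {d k : ℕ}
    (Δ : Fin (k+1) → Set (Fin d → ℝ))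
    (hlat : ∀ i, IsLatticePolytope (Δ i))
    (hrefl : IsReflexive (∑ i, Δ i)) :
    dualConeV (cayleyCone Δ) =
      {y : Vdk d (k+1) | ∃ t : ℝ, 0 ≤ t ∧ ∃ x ∈ convexHull ℝ
        ((fun u => ((u, fun i => -(minPair (Δ i) u)) : Vdk d (k+1))) ''
            polarDual (∑ i, Δ i) ∪
          ⋃ i : Fin (k+1), {(((0 : Fin d → ℝ), Pi.single i 1) : Vdk d (k+1))}),
        y = t • x} := by
  obtain ⟨-, h0, -⟩ := hrefl
  have hK : ∀ i, IsCompact (Δ i) := fun i => (hlat i).isCompact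
  obtain ⟨g, hg, -⟩ := (mem_fintype_sum _ _).1 (interior_subset h0)
  have hne : ∀ i, (Δ i).Nonempty := fun i => ⟨g i, hg i⟩
  show dualConeV (cayleyCone Δ) = coneHull (cayleyGenerators Δ)
  exact (dualConeV_cayleyCone_subset_coneHull hK hne h0).antisymm
    (coneHull_subset (convex_dualConeV _) (fun _ ht _ hy => smul_mem_dualConeV ht hy)
      (cayleyGenerators_subset_dualConeV hK hne))
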